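/- arXiv:2509.18048 — 5 statements merged into one kernel-verified Lean document; each statement's English description precedes it below -/
import Mathlib

section
/- Let A, B be real n×m matrices such that: (i) every column of B has a fixed column sum b > 0; (ii) all entries in each row of A are equal (a_{ij} = a_{ij'} for all i, j, j'), and every column of A has fixed column sum a with a > b. Then rank(A - B) = rank(B). -/
open Submodule Module Matrix

lemma aux_rank {n m : ℕ} (v : Fin m → (Fin n → ℝ)) (j0 : Fin m) (b : ℝ) (hb : b ≠ 0)
    (hf : ∀ j, ∑ i, v j i = b) :
    finrank ℝ (span ℝ (Set.range v)) =
      finrank ℝ (span ℝ (Set.range (fun j => v j - v j0))) + 1 := by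
  set f : (Fin n → ℝ) →ₗ[ℝ] ℝ := ∑ i, LinearMap.proj i with hfdef
  have hfapp : ∀ x : Fin n → ℝ, f x = ∑ i, x i := by
    intro x; simp [hfdef, LinearMap.sum_apply]
  set W := span ℝ (Set.range (fun j => v j - v j0)) with hW
  have hWker : W ≤ LinearMap.ker f := by
    rw [hW, span_le]
    rintro x ⟨j, rfl⟩
    simp only [SetLike.mem_coe, LinearMap.mem_ker, map_sub]
    rw [hfapp, hfapp]
    simp [Finset.sum_apply, hf j, hf j0]
  have hv0 : v j0 ≠ 0 := by
    intro h
    apply hb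
    rw [← hf j0, h]
    simp
  have hspan : span ℝ (Set.range v) = W ⊔ (ℝ ∙ v j0) := by
    apply le_antisymm
    · rw [span_le]
      rintro x ⟨j, rfl⟩
      have : v j = (v j - v j0) + v j0 := by ring
      rw [this]
      exact add_mem (Submodule.mem_sup_left (subset_span ⟨j, rfl⟩))
        (Submodule.mem_sup_right (mem_span_singleton_self _))
    · apply sup_le
      · rw [hW, span_le]
        rintro x ⟨j, rfl⟩
        exact sub_mem (subset_span ⟨j, rfl⟩) (subset_span ⟨j0, rfl⟩)
      · rw [span_le, Set.singleton_subset_iff]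
        exact subset_span ⟨j0, rfl⟩
  have hinf : W ⊓ (ℝ ∙ v j0) = ⊥ := by
    rw [eq_bot_iff]
    rintro x ⟨hx1, hx2⟩
    rcases mem_span_singleton.mp hx2 with ⟨r, rfl⟩
    have : f (r • v j0) = 0 := hWker hx1
    rw [_root_.map_smul, hfapp, hf j0, smul_eq_mul] at this
    have hr : r = 0 := by
      rcases mul_eq_zero.mp this with h | h
      · exact h
      · exact absurd h hb
    simp [hr]
  have := Submodule.finrank_sup_add_finrank_inf_eq W (ℝ ∙ v j0)
  rw [hinf] at this
  simp only [finrank_bot, add_zero] at this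
  rw [hspan, this, finrank_span_singleton hv0]

lemma span_neg_range {n m : ℕ} (d : Fin m → (Fin n → ℝ)) :
    span ℝ (Set.range (fun j => -(d j))) = span ℝ (Set.range d) := by
  apply le_antisymm <;> rw [span_le] <;> rintro x ⟨j, rfl⟩
  · exact neg_mem (subset_span ⟨j, rfl⟩)
  · have : d j = -(-(d j)) := by ring
    rw [this]
    exact neg_mem (subset_span ⟨j, rfl⟩)

theorem stmt_0 (n m : ℕ) (A B : Matrix (Fin n) (Fin m) ℝ) (a b : ℝ)
    (hb : ∀ j, ∑ i, B i j = b) (hbpos : 0 < b)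
    (hArow : ∀ i j j', A i j = A i j')
    (ha : ∀ j, ∑ i, A i j = a) (hab : b < a) :
    (A - B).rank = B.rank := by
  rcases Nat.eq_zero_or_pos m with hm | hm
  · subst hm
    have h1 := Matrix.rank_le_width (A - B)
    have h2 := Matrix.rank_le_width B
    omega
  · have j0 : Fin m := ⟨0, hm⟩
    have hbne : b ≠ 0 := ne_of_gt hbpos
    have habne : a - b ≠ 0 := sub_ne_zero.mpr (ne_of_gt hab)
    rw [Matrix.rank_eq_finrank_span_cols, Matrix.rank_eq_finrank_span_cols]
    have hABsum : ∀ j, ∑ i, (A - B).transpose j i = a - b := by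
      intro j
      simp only [Matrix.transpose_apply, Matrix.sub_apply]
      rw [Finset.sum_sub_distrib, ha j, hb j]
    have hBsum : ∀ j, ∑ i, Bᵀ j i = b := by
      intro j; simpa using hb j
    change finrank ℝ (span ℝ (Set.range (A - B).transpose)) = finrank ℝ (span ℝ (Set.range Bᵀ))
    rw [aux_rank (A - B).transpose j0 (a - b) habne hABsum,
        aux_rank Bᵀ j0 b hbne hBsum]
    congr 1
    have hdiff : (fun j => (A - B).transpose j - (A - B).transpose j0) = fun j => -(Bᵀ j - Bᵀ j0) := by
      funext j i
      simp only [Pi.sub_apply, Pi.neg_apply, Matrix.transpose_apply, Matrix.sub_apply]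
      have : A i j = A i j0 := hArow i j j0
      ring_nf
      linarith
    rw [hdiff, span_neg_range]
end

section
/- Let G be a connected graph containing a cycle C with |V(G)| > |V(C)|. Then there exists a vertex v ∈ V(G) \ V(C) such that the induced subgraph G \ {v} (deleting v and all edges incident to v) is connected. -/
open SimpleGraph

private lemma aux_avoid {V : Type*} [Fintype V] [DecidableEq V] (G : SimpleGraph V)
    (hG : G.Connected) (a : V) (c : G.Walk a a) (v : V) (hv : v ∉ c.support)
    (hmax : ∀ u, u ∉ c.support → G.dist u a ≤ G.dist v a) :
    ∀ n x, G.dist x a ≤ n → x ≠ v → ∃ p : G.Walk x a, v ∉ p.support := by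
  intro n
  induction n with
  | zero =>
    intro x hx _
    have hr : G.Reachable x a := hG x a
    have : x = a := by
      by_contra hne
      have := hr.pos_dist_of_ne hne
      omega
    subst this
    refine ⟨Walk.nil, ?_⟩
    simp only [Walk.support_nil, List.mem_singleton]
    rintro rfl
    exact hv c.start_mem_support
  | succ n ih =>
    intro x hx hxv
    by_cases hxc : x ∈ c.support
    · -- walk along the cycle
      refine ⟨(c.takeUntil x hxc).reverse, ?_⟩
      rw [Walk.support_reverse, List.mem_reverse]
      intro h
      exact hv (c.support_takeUntil_subset hxc h)
    · by_cases hxa : x = a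
      · subst hxa
        exact ⟨Walk.nil, by simp [Ne.symm hxv]⟩
      · have hpos : 0 < G.dist x a := hG.pos_dist_of_ne hxa
        obtain ⟨p, hp⟩ := hG.exists_walk_length_eq_dist x a
        cases p with
        | nil => exact absurd rfl hxa
        | @cons _ w _ h q =>
          have hql : q.length = G.dist x a - 1 := by
            simp [Walk.length_cons] at hp; omega
          have hwd : G.dist w a ≤ G.dist x a - 1 := hql ▸ SimpleGraph.dist_le q
          have hwv : w ≠ v := by
            rintro rfl
            have := hmax x hxc
            omega
          obtain ⟨q', hq'⟩ := ih w (by omega) hwv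
          refine ⟨Walk.cons h q', ?_⟩
          rw [Walk.support_cons, List.mem_cons]
          rintro (rfl | h')
          · exact hxv rfl
          · exact hq' h'

theorem stmt_2 {V : Type*} [Fintype V] [DecidableEq V] (G : SimpleGraph V) (hG : G.Connected)
    (a : V) (c : G.Walk a a) (hc : c.IsCycle)
    (hcard : c.support.toFinset.card < Fintype.card V) :
    ∃ v : V, v ∉ c.support ∧ (G.induce {u : V | u ≠ v}).Connected := by
  classical
  have hne : (Finset.univ.filter (· ∉ c.support)).Nonempty := by
    by_contra h
    rw [Finset.not_nonempty_iff_eq_empty, Finset.filter_eq_empty_iff] at h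
    have : c.support.toFinset = Finset.univ := by
      ext x; simp only [List.mem_toFinset, Finset.mem_univ, iff_true]
      by_contra hx
      exact (h (Finset.mem_univ x)) hx
    rw [this, Finset.card_univ] at hcard
    omega
  obtain ⟨v, hvmem, hvmax⟩ := Finset.exists_max_image
    (Finset.univ.filter (· ∉ c.support)) (fun u => G.dist u a) hne
  simp only [Finset.mem_filter, Finset.mem_univ, true_and, decide_eq_true_eq] at hvmem hvmax
  refine ⟨v, hvmem, ?_⟩
  have hav : a ≠ v := by rintro rfl; exact hvmem c.start_mem_support
  apply G.induce_connected_of_patches a hav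
  intro x hx
  have hx' : x ≠ v := hx
  obtain ⟨p, hp⟩ := aux_avoid G hG a c v hvmem
    (fun u hu => hvmax u (by simpa using hu)) (G.dist x a) x le_rfl hx'
  refine ⟨{w | w ∈ p.support}, ?_, p.end_mem_support, p.start_mem_support, ?_⟩
  · intro w hw
    simp only [Set.mem_setOf_eq] at hw ⊢
    rintro rfl; exact hp hw
  · exact (p.connected_induce_support).preconnected _ _
end

section
/- Let G be a finite simple graph on n vertices and let B be its vertex-edge incidence matrix over ℝ. Then rank(B) = n - b(G), where b(G) is the number of connected components of G that are bipartite (isolated vertices count as bipartite components). -/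
open Classical in
/-- The vertex-edge incidence matrix of a graph: rows indexed by edges,
columns by vertices, with entry `1` iff the vertex lies on the edge. -/
noncomputable def incidenceMatrix {V : Type*} [Fintype V] (G : SimpleGraph V) :
    Matrix G.edgeSet V ℝ :=
  fun e v => if v ∈ (e : Sym2 V) then 1 else 0

/-- `b G` is the number of bipartite connected components of `G`
(isolated vertices count as bipartite components). -/
noncomputable def numBipartiteComponents {V : Type*} [Fintype V] (G : SimpleGraph V) : ℕ :=
  Nat.card {c : G.ConnectedComponent // (G.induce c.supp).Colorable 2}

section Aux

variable {V : Type*} [Fintype V] (G : SimpleGraph V)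

open SimpleGraph Classical

/-- A chosen 2-coloring of each bipartite component. -/
noncomputable def bColoring (c : {c : G.ConnectedComponent // (G.induce c.supp).Colorable 2}) :
    (G.induce (c : G.ConnectedComponent).supp).Coloring (Fin 2) :=
  c.2.some

open Classical in
/-- The ±1 "sign vector" of a bipartite component, extended by zero. -/
noncomputable def bVec (c : {c : G.ConnectedComponent // (G.induce c.supp).Colorable 2}) :
    V → ℝ :=
  fun v => if h : v ∈ (c : G.ConnectedComponent).supp then
    (if bColoring G c ⟨v, h⟩ = 0 then 1 else -1) else 0

lemma bVec_of_not_mem {c : {c : G.ConnectedComponent // (G.induce c.supp).Colorable 2}} {v : V} (h : v ∉ (c : G.ConnectedComponent).supp) :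
    bVec G c v = 0 := by
  simp [bVec, h]

lemma bVec_sq {c : {c : G.ConnectedComponent // (G.induce c.supp).Colorable 2}} {v : V} (h : v ∈ (c : G.ConnectedComponent).supp) :
    bVec G c v * bVec G c v = 1 := by
  simp only [bVec, dif_pos h]
  by_cases hc : bColoring G c ⟨v, h⟩ = 0 <;> simp [hc]

lemma bVec_adj {c : {c : G.ConnectedComponent // (G.induce c.supp).Colorable 2}} {u v : V} (h : G.Adj u v) : bVec G c u + bVec G c v = 0 := by
  by_cases hu : u ∈ (c : G.ConnectedComponent).supp
  · have hv : v ∈ (c : G.ConnectedComponent).supp := by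
      rw [SimpleGraph.ConnectedComponent.mem_supp_iff] at hu ⊢
      rw [← hu]
      exact SimpleGraph.ConnectedComponent.eq.mpr h.symm.reachable
    have hval : (G.induce (c : G.ConnectedComponent).supp).Adj ⟨u, hu⟩ ⟨v, hv⟩ := h
    have hne := (bColoring G c).valid hval
    simp only [bVec, dif_pos hu, dif_pos hv]
    rcases Fin.exists_fin_two.mp ⟨bColoring G c ⟨u, hu⟩, rfl⟩ with _ | _
    all_goals {
      by_cases h0 : bColoring G c ⟨u, hu⟩ = 0 <;>
      by_cases h1 : bColoring G c ⟨v, hv⟩ = 0 <;>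
      first
        | (exfalso; apply hne; omega)
        | simp [h0, h1] }
  · have hv : v ∉ (c : G.ConnectedComponent).supp := by
      intro hv
      apply hu
      rw [SimpleGraph.ConnectedComponent.mem_supp_iff] at hv ⊢
      rw [← hv]
      exact SimpleGraph.ConnectedComponent.eq.mpr h.reachable
    simp [bVec, hu, hv]

variable {G}

/-- Along a walk, a kernel vector alternates sign. -/
lemma ker_walk {x : V → ℝ} (hx : ∀ u v, G.Adj u v → x u + x v = 0)
    {u v : V} (p : G.Walk u v) : x v = (-1) ^ p.length * x u := by
  induction p with
  | nil => simp
  | cons h q ih =>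
    rw [SimpleGraph.Walk.length_cons, pow_succ]
    have h2 := hx _ _ h
    linear_combination ih + (-1 : ℝ) ^ q.length * h2

lemma ker_mul_const {x y : V → ℝ} (hx : ∀ u v, G.Adj u v → x u + x v = 0)
    (hy : ∀ u v, G.Adj u v → y u + y v = 0) {u v : V} (h : G.Reachable u v) :
    x v * y v = x u * y u := by
  obtain ⟨p⟩ := h
  rw [ker_walk hx p, ker_walk hy p]
  have : ((-1 : ℝ)) ^ p.length * (-1) ^ p.length = 1 := by
    rw [← pow_add, ← two_mul, pow_mul]
    norm_num
  linear_combination x u * y u * this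

/-- A kernel vector vanishes on non-bipartite components. -/
lemma ker_zero_of_not_bip {x : V → ℝ} (hx : ∀ u v, G.Adj u v → x u + x v = 0)
    {v : V} (hv : ¬ (G.induce (G.connectedComponentMk v).supp).Colorable 2) :
    x v = 0 := by
  by_contra hxv
  apply hv
  refine ⟨SimpleGraph.Coloring.mk (fun u => if 0 < x u.1 then 0 else 1) ?_⟩
  rintro ⟨a, ha⟩ ⟨b, hb⟩ hab
  have hadj : G.Adj a b := hab
  have hra : G.Reachable v a := by
    rw [SimpleGraph.ConnectedComponent.mem_supp_iff] at ha
    exact SimpleGraph.ConnectedComponent.eq.mp ha.symm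
  have hxa : x a * x a = x v * x v := ker_mul_const hx hx hra
  have hxa0 : x a ≠ 0 := by
    intro h0
    apply hxv
    have : x v * x v = 0 := by rw [← hxa, h0]; ring
    exact mul_self_eq_zero.mp this
  have hxb : x b = - x a := by linarith [hx a b hadj]
  by_cases hpos : 0 < x a
  · have : ¬ (0 < x b) := by rw [hxb]; linarith
    simp [hpos, this]
  · have : 0 < x b := by
      rw [hxb]
      rcases lt_trichotomy (x a) 0 with h | h | h
      · linarith
      · exact absurd h hxa0
      · exact absurd h hpos
    simp [hpos, this]

end Aux

theorem stmt_5 {V : Type*} [Fintype V] (G : SimpleGraph V) :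
    (incidenceMatrix G).rank = Fintype.card V - numBipartiteComponents G := by
  classical
  set L := (incidenceMatrix G).mulVecLin with hL
  -- kernel membership characterization
  have hker : ∀ x : V → ℝ, x ∈ LinearMap.ker L ↔ ∀ u v, G.Adj u v → x u + x v = 0 := by
    intro x
    have hmv : ∀ (u v : V) (h : G.Adj u v),
        L x ⟨s(u, v), (G.mem_edgeSet).mpr h⟩ = x u + x v := by
      intro u v h
      have : L x ⟨s(u, v), (G.mem_edgeSet).mpr h⟩ =
          ∑ w : V, (if w ∈ (s(u, v) : Sym2 V) then (1 : ℝ) else 0) * x w := rfl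
      rw [this]
      have : ∀ w : V, (if w ∈ (s(u, v) : Sym2 V) then (1 : ℝ) else 0) * x w =
          if w ∈ ({u, v} : Finset V) then x w else 0 := by
        intro w
        by_cases hw : w ∈ (s(u, v) : Sym2 V)
        · rw [if_pos hw, if_pos, one_mul]
          rw [Sym2.mem_iff] at hw
          simp [hw]
        · rw [if_neg hw, if_neg, zero_mul]
          rw [Sym2.mem_iff] at hw
          simpa using hw
      rw [Finset.sum_congr rfl (fun w _ => this w), Finset.sum_ite_mem,
        Finset.univ_inter, Finset.sum_pair h.ne]
    constructor
    · intro hx u v h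
      have := congrFun hx ⟨s(u, v), (G.mem_edgeSet).mpr h⟩
      rw [hmv u v h] at this
      exact this
    · intro hx
      funext e
      obtain ⟨e, he⟩ := e
      induction e with
      | _ u v =>
        have h : G.Adj u v := (G.mem_edgeSet).mp he
        have := hmv u v h
        simp only [Pi.zero_apply]
        rw [this]
        exact hx u v h
  -- the basis of the kernel
  haveI : Finite {c : G.ConnectedComponent // (G.induce c.supp).Colorable 2} := by
    have : Finite G.ConnectedComponent := Quot.finite _
    exact Subtype.finite
  haveI : Fintype {c : G.ConnectedComponent // (G.induce c.supp).Colorable 2} :=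
    Fintype.ofFinite _
  -- representative of a component
  have rep_spec : ∀ c : G.ConnectedComponent, ∃ v, G.connectedComponentMk v = c :=
    fun c => Quot.exists_rep c
  set rep : G.ConnectedComponent → V := fun c => (rep_spec c).choose with hrep
  have hrepc : ∀ c, G.connectedComponentMk (rep c) = c := fun c => (rep_spec c).choose_spec
  set ι := {c : G.ConnectedComponent // (G.induce c.supp).Colorable 2} with hι
  have hmemrep : ∀ i : ι, rep (i : G.ConnectedComponent) ∈ (i : G.ConnectedComponent).supp :=
    fun i => (SimpleGraph.ConnectedComponent.mem_supp_iff _ _).mpr (hrepc _)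
  set b : ι → LinearMap.ker L := fun i => ⟨bVec G i, (hker _).mpr (fun u v h => bVec_adj G h)⟩
    with hb
  have hbval : ∀ (i : ι) (v : V), (b i : V → ℝ) v = bVec G i v := fun i v => rfl
  -- linear independence
  have hli : LinearIndependent ℝ b := by
    rw [Fintype.linearIndependent_iff]
    intro g hg i
    have hsum : ∀ v : V, (∑ j : ι, g j • (b j : V → ℝ)) v = 0 := by
      intro v
      have h1 : ((∑ j : ι, g j • b j : LinearMap.ker L) : V → ℝ) = 0 := by
        rw [hg]; rfl
      calc (∑ j : ι, g j • (b j : V → ℝ)) v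
          = ((∑ j : ι, g j • b j : LinearMap.ker L) : V → ℝ) v := by
            push_cast
            rfl
        _ = 0 := by rw [h1]; rfl
    have := hsum (rep (i : G.ConnectedComponent))
    rw [Finset.sum_apply] at this
    rw [Finset.sum_eq_single i] at this
    · simp only [Pi.smul_apply, smul_eq_mul, hbval] at this
      have hsq := bVec_sq G (hmemrep i)
      have : g i * (bVec G i (rep (i : G.ConnectedComponent)) *
          bVec G i (rep (i : G.ConnectedComponent))) = 0 := by
        rw [← mul_assoc, this, zero_mul]
      rwa [hsq, mul_one] at this
    · intro j _ hji
      simp only [Pi.smul_apply, smul_eq_mul, hbval]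
      rw [bVec_of_not_mem G, mul_zero]
      rw [SimpleGraph.ConnectedComponent.mem_supp_iff, hrepc]
      intro h
      exact hji (Subtype.ext h.symm)
    · intro h
      exact absurd (Finset.mem_univ i) h
  -- spanning
  have hspan : ⊤ ≤ Submodule.span ℝ (Set.range b) := by
    intro x _
    have hx := (hker (x : V → ℝ)).mp x.2
    have hxeq : x = ∑ i : ι, ((x : V → ℝ) (rep (i : G.ConnectedComponent)) *
        bVec G i (rep (i : G.ConnectedComponent))) • b i := by
      apply Subtype.ext
      have hcast : ((∑ i : ι, ((x : V → ℝ) (rep (i : G.ConnectedComponent)) *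
          bVec G i (rep (i : G.ConnectedComponent))) • b i : LinearMap.ker L) : V → ℝ)
          = ∑ i : ι, ((x : V → ℝ) (rep (i : G.ConnectedComponent)) *
          bVec G i (rep (i : G.ConnectedComponent))) • (b i : V → ℝ) := by
        push_cast
        rfl
      rw [hcast]
      funext v
      rw [Finset.sum_apply]
      simp only [Pi.smul_apply, smul_eq_mul, hbval]
      by_cases hbip : (G.induce (G.connectedComponentMk v).supp).Colorable 2
      · set i₀ : ι := ⟨G.connectedComponentMk v, hbip⟩ with hi₀
        rw [Finset.sum_eq_single i₀]
        · have hvmem : v ∈ (i₀ : G.ConnectedComponent).supp :=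
            (SimpleGraph.ConnectedComponent.mem_supp_iff _ _).mpr rfl
          have hreach : G.Reachable (rep (i₀ : G.ConnectedComponent)) v := by
            apply SimpleGraph.ConnectedComponent.eq.mp
            rw [hrepc]
          have hkey : (x : V → ℝ) v * bVec G i₀ v =
              (x : V → ℝ) (rep (i₀ : G.ConnectedComponent)) *
              bVec G i₀ (rep (i₀ : G.ConnectedComponent)) :=
            ker_mul_const hx (fun u w h => bVec_adj G h) hreach
          have hsq := bVec_sq G hvmem
          calc (x : V → ℝ) v = (x : V → ℝ) v * (bVec G i₀ v * bVec G i₀ v) := by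
                rw [hsq, mul_one]
            _ = ((x : V → ℝ) v * bVec G i₀ v) * bVec G i₀ v := by ring
            _ = _ := by rw [hkey]
        · intro j _ hj
          have hv0 : bVec G j v = 0 := by
            apply bVec_of_not_mem G
            rw [SimpleGraph.ConnectedComponent.mem_supp_iff]
            intro h
            exact hj (Subtype.ext h.symm)
          rw [hv0, mul_zero]
        · intro h
          exact absurd (Finset.mem_univ i₀) h
      · rw [ker_zero_of_not_bip hx hbip]
        apply (Finset.sum_eq_zero _).symm
        intro j _
        have hv0 : bVec G j v = 0 := by
          apply bVec_of_not_mem G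
          rw [SimpleGraph.ConnectedComponent.mem_supp_iff]
          intro h
          rw [h] at hbip
          exact hbip j.2
        rw [hv0, mul_zero]
    rw [hxeq]
    exact Submodule.sum_mem _ fun i _ =>
      Submodule.smul_mem _ _ (Submodule.subset_span (Set.mem_range_self i))
  -- finish with rank-nullity
  let Bas : Module.Basis ι ℝ (LinearMap.ker L) := Module.Basis.mk hli hspan
  have hkerdim : Module.finrank ℝ (LinearMap.ker L) = numBipartiteComponents G := by
    rw [Module.finrank_eq_card_basis Bas, numBipartiteComponents, Nat.card_eq_fintype_card]
  have hrn := LinearMap.finrank_range_add_finrank_ker L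
  rw [hkerdim] at hrn
  have hfr : Module.finrank ℝ (V → ℝ) = Fintype.card V := by
    simp [Module.finrank_pi]
  rw [hfr] at hrn
  have : (incidenceMatrix G).rank = Module.finrank ℝ (LinearMap.range L) := rfl
  omega
end

section
/- Let W be a primitive even closed walk in a graph H that passes through a fixed vertex v at least twice. If every segment of W between consecutive visits to v has even length, then W passes through v exactly twice. More precisely: if W can be written as v, q_1,...,q_d, v, q_{d+1},...,q_{d+s}, v, ... with d and s even, then W equals the closed walk v, q_1,...,q_d, v, q_{d+1},...,q_{d+s}, v. -/
/-- A closed walk is a primitive even closed walk if it has even length and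
admits no proper even closed subwalk. -/
def IsPrimitiveEven {V : Type*} {G : SimpleGraph V} {v : V} (W : G.Walk v v) : Prop :=
  Even W.length ∧
    ∀ (u : V) (p : G.Walk v u) (q : G.Walk u u) (r : G.Walk u v),
      W = p.append (q.append r) → Even q.length →
        q.length = 0 ∨ q.length = W.length

/-- A primitive even closed walk whose segments between consecutive visits to a
vertex `v` have odd length (i.e. `d` and `s` even in the notation of the paper)
passes through `v` exactly twice: the remainder after the first two segments is
trivial. -/
theorem stmt_7 {V : Type*} {G : SimpleGraph V} (v : V)
    (w₁ w₂ w₃ : G.Walk v v) (d s : ℕ)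
    (h₁ : w₁.length = d + 1) (h₂ : w₂.length = s + 1)
    (hd : Even d) (hs : Even s)
    (W : G.Walk v v) (hW : W = w₁.append (w₂.append w₃))
    (hprim : IsPrimitiveEven W) :
    w₃ = SimpleGraph.Walk.nil := by
  obtain ⟨heven, hsub⟩ := hprim
  have hW' : W = SimpleGraph.Walk.nil.append ((w₁.append w₂).append w₃) := by
    rw [SimpleGraph.Walk.nil_append, hW, SimpleGraph.Walk.append_assoc]
  have hq : Even (w₁.append w₂).length := by
    rw [SimpleGraph.Walk.length_append, h₁, h₂]
    obtain ⟨a, ha⟩ := hd; obtain ⟨b, hb⟩ := hs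
    exact ⟨a + b + 1, by omega⟩
  rcases hsub v SimpleGraph.Walk.nil (w₁.append w₂) w₃ hW' hq with h | h
  · rw [SimpleGraph.Walk.length_append, h₁, h₂] at h; omega
  · have hlen : W.length = (w₁.append w₂).length + w₃.length := by
      rw [hW, SimpleGraph.Walk.length_append, SimpleGraph.Walk.length_append,
        SimpleGraph.Walk.length_append]; ring
    have : w₃.length = 0 := by omega
    cases w₃ with
    | nil => rfl
    | cons h p => simp at this
end

section
/- Let s ≥ 2, n = 2s+1, and let S = K[x_1,...,x_n] be a polynomial ring over a field K. Let I = I_c(C_n) be the ideal generated by the monomials (x_1⋯x_n)/(x_i x_j) for the edges {i,j} of the n-cycle C_n (edges {i,i+1} for 1 ≤ i ≤ 2s and {2s+1,1}). Then for u = (x_1⋯x_n)^{s-1}, one has x_i · u ∈ I^s for every 1 ≤ i ≤ n, but u ∉ I^s; consequently I^s : (u) = (x_1,...,x_n). -/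
open MvPolynomial
open Fin.NatCast

section CycleHelpers

variable {σ R : Type*} [CommSemiring R]

private lemma prod_monomial_one' {τ : Type*} (t : Finset τ) (e : τ → (σ →₀ ℕ)) :
    ∏ x ∈ t, (monomial (e x) (1 : R)) = monomial (∑ x ∈ t, e x) 1 := by
  classical
  induction t using Finset.cons_induction with
  | empty => simp
  | cons a A ha ih => rw [Finset.prod_cons, ih, Finset.sum_cons, monomial_mul, one_mul]

private lemma X_eq_monomial' (j : σ) :
    (X j : MvPolynomial σ R) = monomial (Finsupp.single j 1) 1 := rfl

private lemma prodX_eq_monomial' (A : Finset σ) :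
    ∏ j ∈ A, (X j : MvPolynomial σ R) = monomial (∑ j ∈ A, Finsupp.single j 1) 1 := by
  simp_rw [X_eq_monomial']; exact prod_monomial_one' A _

/-- The ideal of polynomials all of whose monomials have degree ≥ D. -/
private noncomputable def lowDeg (σ R : Type*) [CommSemiring R] (D : ℕ) :
    Ideal (MvPolynomial σ R) where
  carrier := {f | ∀ d : σ →₀ ℕ, Finsupp.weight (1 : σ → ℕ) d < D → coeff d f = 0}
  zero_mem' := fun d _ => rfl
  add_mem' := by
    intro a b ha hb d hd
    rw [coeff_add, ha d hd, hb d hd, add_zero]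
  smul_mem' := by
    classical
    intro c f hf d hd
    rw [smul_eq_mul, coeff_mul]
    refine Finset.sum_eq_zero fun x hx => ?_
    rw [Finset.HasAntidiagonal.mem_antidiagonal] at hx
    have h2 : Finsupp.weight (1 : σ → ℕ) x.2 ≤ Finsupp.weight (1 : σ → ℕ) d := by
      rw [← hx, map_add]; exact Nat.le_add_left _ _
    rw [hf x.2 (lt_of_le_of_lt h2 hd), mul_zero]

private lemma mem_lowDeg_iff {D : ℕ} {f : MvPolynomial σ R} :
    f ∈ lowDeg σ R D ↔ ∀ d : σ →₀ ℕ, Finsupp.weight (1 : σ → ℕ) d < D → coeff d f = 0 :=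
  ⟨fun h => h, fun h => h⟩

private lemma monomial_mem_lowDeg {d : σ →₀ ℕ} (c : R) {D : ℕ}
    (h : D ≤ Finsupp.weight (1 : σ → ℕ) d) : monomial d c ∈ lowDeg σ R D := by
  classical
  rw [mem_lowDeg_iff]
  intro d' hd'
  rw [coeff_monomial, if_neg]
  rintro rfl; omega

private lemma lowDeg_mul_le (a b : ℕ) : lowDeg σ R a * lowDeg σ R b ≤ lowDeg σ R (a + b) := by
  classical
  rw [Ideal.mul_le]
  intro f hf g hg
  rw [mem_lowDeg_iff] at hf hg ⊢
  intro d hd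
  rw [coeff_mul]
  refine Finset.sum_eq_zero fun x hx => ?_
  rw [Finset.HasAntidiagonal.mem_antidiagonal] at hx
  have hsum : Finsupp.weight (1 : σ → ℕ) x.1 + Finsupp.weight (1 : σ → ℕ) x.2
      = Finsupp.weight (1 : σ → ℕ) d := by
    rw [← hx, map_add]
  by_cases h1 : Finsupp.weight (1 : σ → ℕ) x.1 < a
  · rw [hf x.1 h1, zero_mul]
  · rw [hg x.2 (by omega), mul_zero]

private lemma lowDeg_pow_le (a k : ℕ) : (lowDeg σ R a) ^ k ≤ lowDeg σ R (k * a) := by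
  induction k with
  | zero =>
      rw [pow_zero]
      intro f _
      rw [mem_lowDeg_iff]
      intro d hd
      rw [Nat.zero_mul] at hd
      exact absurd hd (Nat.not_lt_zero _)
  | succ k ih =>
      rw [pow_succ]
      calc lowDeg σ R a ^ k * lowDeg σ R a ≤ lowDeg σ R (k * a) * lowDeg σ R a :=
            Ideal.mul_mono_left ih
        _ ≤ lowDeg σ R (k * a + a) := lowDeg_mul_le _ _
        _ = lowDeg σ R ((k + 1) * a) := by ring_nf

private lemma prod_mem_pow' {R' : Type*} [CommSemiring R'] (I : Ideal R') (f : ℕ → R') (s : ℕ)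
    (h : ∀ t ∈ Finset.range s, f t ∈ I) : ∏ t ∈ Finset.range s, f t ∈ I ^ s := by
  induction s with
  | zero => simp [Ideal.one_eq_top]
  | succ k ih =>
      rw [Finset.prod_range_succ, pow_succ]
      exact Ideal.mul_mem_mul (ih fun t ht => h t (by simp at ht ⊢; omega)) (h k (by simp))

private lemma mem_span_X_iff' {f : MvPolynomial σ R} :
    f ∈ Ideal.span (Set.range (X : σ → MvPolynomial σ R)) ↔ coeff 0 f = 0 := by
  classical
  rw [← Set.image_univ, mem_ideal_span_X_image]
  constructor
  · intro h
    by_contra h0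
    obtain ⟨i, -, hi⟩ := h 0 (by rwa [MvPolynomial.mem_support_iff])
    simp at hi
  · intro h0 m hm
    have hm0 : m ≠ 0 := by
      rintro rfl; exact (MvPolynomial.mem_support_iff.mp hm) h0
    obtain ⟨i, hi⟩ := DFunLike.ne_iff.mp hm0
    exact ⟨i, Set.mem_univ i, hi⟩

private lemma weight_single_one' (j : σ) :
    Finsupp.weight (1 : σ → ℕ) (Finsupp.single j 1) = 1 := by
  simp [Finsupp.weight_apply, Finsupp.sum_single_index]

private lemma weight_sum_single' (A : Finset σ) :
    Finsupp.weight (1 : σ → ℕ) (∑ j ∈ A, Finsupp.single j 1) = A.card := by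
  rw [map_sum]
  simp [weight_single_one']

private lemma count_lemma' (s : ℕ) (hs : 2 ≤ s) (i k : Fin (2 * s + 1)) :
    ((Finset.range s).filter (fun t =>
        k = i + ((2 * t + 1 : ℕ) : Fin (2 * s + 1)) ∨
        k = i + ((2 * t + 2 : ℕ) : Fin (2 * s + 1)))).card
      = if k = i then 0 else 1 := by
  have hn : 0 < 2 * s + 1 := by omega
  set v := (k - i).val with hv
  have hvlt : v < 2 * s + 1 := (k - i).isLt
  have key : ∀ m : ℕ, m < 2 * s + 1 →
      ((k = i + (m : Fin (2 * s + 1))) ↔ v = m) := by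
    intro m hm
    rw [show (k = i + (m : Fin (2 * s + 1))) ↔ (k - i = (m : Fin (2 * s + 1))) from ?_,
      Fin.ext_iff, Fin.val_natCast, Nat.mod_eq_of_lt hm]
    constructor
    · intro h; rw [h]; abel
    · intro h; rw [← h]; abel
  have hfilter : ((Finset.range s).filter (fun t =>
      k = i + ((2 * t + 1 : ℕ) : Fin (2 * s + 1)) ∨
      k = i + ((2 * t + 2 : ℕ) : Fin (2 * s + 1))))
      = (Finset.range s).filter (fun t => v = 2 * t + 1 ∨ v = 2 * t + 2) := by
    refine Finset.filter_congr fun t ht => ?_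
    rw [Finset.mem_range] at ht
    rw [key _ (by omega), key _ (by omega)]
  rw [hfilter]
  by_cases hk : k = i
  · have hv0 : v = 0 := by rw [hv, hk, sub_self, Fin.val_zero]
    rw [if_pos hk, Finset.card_eq_zero, Finset.filter_eq_empty_iff]
    intro t _
    omega
  · have hv0 : v ≠ 0 := by
      intro h
      apply hk
      have h2 : k - i = 0 := by rwa [Fin.ext_iff, Fin.val_zero]
      rwa [sub_eq_zero] at h2
    rw [if_neg hk]
    have hone : (Finset.range s).filter (fun t => v = 2 * t + 1 ∨ v = 2 * t + 2)
        = {(v - 1) / 2} := by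
      ext t
      simp only [Finset.mem_filter, Finset.mem_range, Finset.mem_singleton]
      omega
    rw [hone, Finset.card_singleton]

private lemma key1' {K : Type*} [Field K] (s : ℕ) (hs : 2 ≤ s) (i : Fin (2 * s + 1)) :
    X i * ((∏ j, (X j : MvPolynomial (Fin (2 * s + 1)) K)) ^ (s - 1))
      = ∏ t ∈ Finset.range s,
          ∏ j ∈ Finset.univ \ {i + ((2 * t + 1 : ℕ) : Fin (2 * s + 1)),
              i + ((2 * t + 1 : ℕ) : Fin (2 * s + 1)) + 1},
            (X j : MvPolynomial (Fin (2 * s + 1)) K) := by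
  have hcast : ∀ t : ℕ,
      i + ((2 * t + 1 : ℕ) : Fin (2 * s + 1)) + 1 = i + ((2 * t + 2 : ℕ) : Fin (2 * s + 1)) := by
    intro t
    have h2 : ((2 * t + 2 : ℕ) : Fin (2 * s + 1)) = ((2 * t + 1 : ℕ) : Fin (2 * s + 1)) + 1 := by
      exact Nat.cast_succ (2 * t + 1)
    rw [h2, ← add_assoc]
  simp only [hcast, prodX_eq_monomial']
  rw [prod_monomial_one', monomial_pow, one_pow, X_eq_monomial', monomial_mul, one_mul]
  refine congrArg (fun e => monomial e (1 : K)) ?_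
  ext k
  simp only [Finsupp.add_apply, Finsupp.smul_apply, Finsupp.finset_sum_apply,
    Finsupp.single_apply, Finset.sum_ite_eq', Finset.mem_univ, if_true, smul_eq_mul, mul_one,
    Finset.mem_sdiff, Finset.mem_insert, Finset.mem_singleton, true_and]
  rw [Finset.sum_boole, Nat.cast_id]
  have h1 := count_lemma' s hs i k
  have h2 := Finset.card_filter_add_card_filter_not (s := Finset.range s)
      (p := fun t => k = i + ((2 * t + 1 : ℕ) : Fin (2 * s + 1)) ∨
        k = i + ((2 * t + 2 : ℕ) : Fin (2 * s + 1)))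
  rw [Finset.card_range] at h2
  rw [h1] at h2
  split_ifs at h2 ⊢ with hik hki hki
  · omega
  · exact absurd hik.symm hki
  · exact absurd hki.symm hik
  · omega

end CycleHelpers

open MvPolynomial in
theorem stmt_11 {K : Type*} [Field K] (s : ℕ) (hs : 2 ≤ s)
    (I : Ideal (MvPolynomial (Fin (2 * s + 1)) K))
    (hI : I = Ideal.span (Set.range fun i : Fin (2 * s + 1) =>
      ∏ j ∈ Finset.univ \ {i, i + 1}, (X j : MvPolynomial (Fin (2 * s + 1)) K)))
    (u : MvPolynomial (Fin (2 * s + 1)) K)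
    (hu : u = (∏ j, (X j : MvPolynomial (Fin (2 * s + 1)) K)) ^ (s - 1)) :
    (∀ i : Fin (2 * s + 1), X i * u ∈ I ^ s) ∧ u ∉ I ^ s ∧
      Submodule.colon (I ^ s) (Ideal.span {u}) =
        Ideal.span (Set.range (X : Fin (2 * s + 1) → MvPolynomial (Fin (2 * s + 1)) K)) := by
  classical
  -- Part 1
  have mem1 : ∀ i : Fin (2 * s + 1), X i * u ∈ I ^ s := by
    intro i
    rw [hu, key1' s hs i]
    refine prod_mem_pow' _ _ s fun t _ => ?_
    rw [hI]
    exact Ideal.subset_span ⟨i + ((2 * t + 1 : ℕ) : Fin (2 * s + 1)), rfl⟩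
  -- degree bounds
  have hne : ∀ i : Fin (2 * s + 1), i ≠ i + 1 := by
    intro i h
    have h1 : (1 : Fin (2 * s + 1)) = 0 := left_eq_add.mp h
    rw [Fin.one_eq_zero_iff] at h1
    omega
  have hIle : I ≤ lowDeg (Fin (2 * s + 1)) K (2 * s - 1) := by
    rw [hI, Ideal.span_le]
    rintro _ ⟨i, rfl⟩
    rw [SetLike.mem_coe]
    simp only
    rw [prodX_eq_monomial']
    refine monomial_mem_lowDeg _ ?_
    rw [weight_sum_single', Finset.card_sdiff_of_subset (Finset.subset_univ _), Finset.card_univ,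
      Fintype.card_fin]
    rw [Finset.card_insert_of_notMem (by rw [Finset.mem_singleton]; exact hne i),
      Finset.card_singleton]
    omega
  have hpow : I ^ s ≤ lowDeg (Fin (2 * s + 1)) K (s * (2 * s - 1)) :=
    le_trans (Ideal.pow_right_mono hIle s) (lowDeg_pow_le _ s)
  have hu' : u = monomial ((s - 1) • ∑ j, Finsupp.single j 1) 1 := by
    rw [hu, prodX_eq_monomial', monomial_pow, one_pow]
  have hwm0 : Finsupp.weight (1 : Fin (2 * s + 1) → ℕ)
      ((s - 1) • ∑ j, Finsupp.single j 1) = (s - 1) * (2 * s + 1) := by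
    rw [map_nsmul, weight_sum_single', Finset.card_univ, Fintype.card_fin, smul_eq_mul]
  have hlt : (s - 1) * (2 * s + 1) < s * (2 * s - 1) := by
    obtain ⟨m, rfl⟩ : ∃ m, s = m + 2 := ⟨s - 2, by omega⟩
    rw [show m + 2 - 1 = m + 1 from by omega, show 2 * (m + 2) - 1 = 2 * m + 3 from by omega]
    nlinarith
  -- Part 2
  have mem2 : u ∉ I ^ s := by
    intro h
    have h2 := hpow h
    rw [mem_lowDeg_iff] at h2
    have h3 := h2 _ (by rw [hwm0]; exact hlt)
    rw [hu', coeff_monomial, if_pos rfl] at h3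
    exact one_ne_zero h3
  refine ⟨mem1, mem2, ?_⟩
  -- Part 3
  apply le_antisymm
  · intro f hf
    have hfu : f * u ∈ I ^ s := by
      exact Ideal.mem_colon_span_singleton.mp hf
    rw [mem_span_X_iff']
    have h2 := hpow hfu
    rw [mem_lowDeg_iff] at h2
    have h3 := h2 ((s - 1) • ∑ j, Finsupp.single j 1) (by rw [hwm0]; exact hlt)
    rw [hu', coeff_mul_monomial', if_pos le_rfl, tsub_self, mul_one] at h3
    exact h3
  · rw [Ideal.span_le]
    rintro _ ⟨i, rfl⟩
    rw [SetLike.mem_coe]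
    exact Ideal.mem_colon_span_singleton.mpr (mem1 i)
end
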